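/- arXiv:2201.05999 — 3 statements merged into one kernel-verified Lean document; each statement's English description precedes it below -/
import Mathlib

section
/- For any real numbers k > 0 and Γ with 0 ≤ Γ ≤ k/2, the maximum of the two ratios 2k/(2k−Γ) and (3k+Γ)/(2k+2Γ) is at least 3/4 + √33/12. -/
theorem stmt_0 (k Γ : ℝ) (hk : 0 < k) (hΓ0 : 0 ≤ Γ) (hΓ : Γ ≤ k / 2) :
    3 / 4 + Real.sqrt 33 / 12 ≤
      max (2 * k / (2 * k - Γ)) ((3 * k + Γ) / (2 * k + 2 * Γ)) := by
  have hs0 : (0:ℝ) ≤ Real.sqrt 33 := Real.sqrt_nonneg 33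
  have hs2 : Real.sqrt 33 ^ 2 = 33 := Real.sq_sqrt (by norm_num)
  have hs5 : 5 < Real.sqrt 33 := by nlinarith
  rcases le_total Γ ((Real.sqrt 33 - 5) / 2 * k) with h | h
  · refine le_max_of_le_right ?_
    rw [le_div_iff₀ (by linarith)]
    nlinarith [mul_nonneg hΓ0 hs0]
  · refine le_max_of_le_left ?_
    rw [le_div_iff₀ (by linarith)]
    nlinarith [mul_nonneg hΓ0 hs0]
end

section
/- The supremum over τ ∈ (0, 1/2) of the function h(τ) = 1 + (1/2 − τ)/(τ − ln(2τ)) is strictly greater than 1.2691534, i.e., there exists τ ∈ (0, 1/2) with h(τ) ≥ 1.2691534. -/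
lemma exp_le_bound : Real.exp (-0.8576917) ≤ 0.42414 := by
  have h := Real.exp_bound (x := -0.8576917) (by rw [abs_of_nonpos] <;> norm_num) (n := 14) (by norm_num)
  have h2 := abs_le.1 h
  have hs : |(-0.8576917 : ℝ)| = 0.8576917 := by
    rw [abs_of_nonpos] <;> norm_num
  rw [hs] at h2
  have := h2.2
  simp only [Finset.sum_range_succ, Finset.sum_range_zero, Nat.factorial] at this
  norm_num at this ⊢
  linarith

theorem stmt_14 :
    ∃ τ ∈ Set.Ioo (0 : ℝ) (1 / 2),
      1 + (1 / 2 - τ) / (τ - Real.log (2 * τ)) ≥ 1.2691534 := by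
  refine ⟨0.21207, by norm_num, ?_⟩
  have hL : Real.log (2 * 0.21207) ≥ -0.8576917 := by
    rw [ge_iff_le, Real.le_log_iff_exp_le (by norm_num)]
    have := exp_le_bound
    norm_num at this ⊢
    linarith
  have hLneg : Real.log (2 * 0.21207) < 0 := by
    rw [Real.log_neg_iff (by norm_num)]
    norm_num
  have hD : (0.21207 : ℝ) - Real.log (2 * 0.21207) > 0 := by linarith
  rw [ge_iff_le, ← sub_nonneg]
  have key : (1 / 2 - 0.21207 : ℝ) ≥ 0.2691534 * (0.21207 - Real.log (2 * 0.21207)) := by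
    nlinarith [hL]
  have : (1 / 2 - 0.21207 : ℝ) / (0.21207 - Real.log (2 * 0.21207)) ≥ 0.2691534 := by
    rw [ge_iff_le, le_div_iff₀ hD]
    linarith
  norm_num at this ⊢
  linarith
end

section
/- For all integers k ≥ 2 and all integers Γ with 0 ≤ Γ ≤ ⌊k/2⌋, the maximum of 2k/(2k − Γ) and (3k + Γ − ((k − Γ) mod 2))/(2k + 2Γ) is at least (3/4 + √33/12) − 1/(2k). -/
/-!
Put `g = Γ / k`. The first ratio `2 / (2 - g)` increases and the parity-free second ratio
`(3 + g) / (2 + 2g)` decreases in `g`; they cross at the root of `g² + 5g - 2`, where both equal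
`c = 3/4 + √33/12`, the larger root of `6c² - 9c + 2`. So their maximum is at least `c`, and the
parity term costs at most `1 / (2k + 2Γ) ≤ 1 / (2k)`.
-/

lemma three_fourths_add_sqrt33_div_twelve_isRoot :
    6 * (3 / 4 + √33 / 12) ^ 2 - 9 * (3 / 4 + √33 / 12) + 2 = 0 := by
  have h : √33 ^ 2 = 33 := Real.sq_sqrt (by norm_num)
  linear_combination h / 24

lemma le_max_div_of_quadratic_nonpos {c k Γ : ℝ} (hc : 6 * c ^ 2 - 9 * c + 2 ≤ 0)
    (hk : 0 < k) (hΓ₀ : 0 ≤ Γ) (hΓk : Γ < 2 * k) :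
    c ≤ max (2 * k / (2 * k - Γ)) ((3 * k + Γ) / (2 * k + 2 * Γ)) := by
  by_contra! h
  rw [max_lt_iff, div_lt_iff₀ (by linarith), div_lt_iff₀ (by linarith)] at h
  obtain ⟨hfirst, hsecond⟩ := h
  have hc1 : 1 < c := by nlinarith
  -- multiplying the second inequality by `c` and feeding in the first gives `k (6c² - 9c + 2) > 0`
  nlinarith [mul_lt_mul_of_pos_left hsecond (by linarith : (0 : ℝ) < c)]

lemma div_sub_one_div_le_sub_div {k Γ p : ℝ} (hk : 0 < k) (hΓ₀ : 0 ≤ Γ) (hp : p ≤ 1) :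
    (3 * k + Γ) / (2 * k + 2 * Γ) - 1 / (2 * k) ≤ (3 * k + Γ - p) / (2 * k + 2 * Γ) := by
  have hD : 0 < 2 * k + 2 * Γ := by linarith
  calc (3 * k + Γ) / (2 * k + 2 * Γ) - 1 / (2 * k)
      ≤ (3 * k + Γ) / (2 * k + 2 * Γ) - 1 / (2 * k + 2 * Γ) := by
        gcongr
        linarith
    _ ≤ (3 * k + Γ - p) / (2 * k + 2 * Γ) := by
        rw [← sub_div]
        gcongr

theorem stmt_18 (k Γ : ℤ) (hk : 2 ≤ k) (h0 : 0 ≤ Γ) (hΓ : Γ ≤ k / 2) :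
    (3 / 4 + Real.sqrt 33 / 12) - 1 / (2 * (k : ℝ)) ≤
      max ((2 * k : ℝ) / (2 * k - Γ))
        (((3 * k : ℝ) + Γ - (((k - Γ) % 2 : ℤ) : ℝ)) / (2 * k + 2 * Γ)) := by
  have hkR : (0 : ℝ) < k := by exact_mod_cast (by omega : 0 < k)
  have hΓR : (0 : ℝ) ≤ Γ := by exact_mod_cast h0
  have hΓk : (Γ : ℝ) < 2 * k := by exact_mod_cast (by omega : Γ < 2 * k)
  have hparity : (((k - Γ) % 2 : ℤ) : ℝ) ≤ 1 := by exact_mod_cast (by omega : (k - Γ) % 2 ≤ 1)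
  have hmax :=
    le_max_div_of_quadratic_nonpos three_fourths_add_sqrt33_div_twelve_isRoot.le hkR hΓR hΓk
  have hcorr := div_sub_one_div_le_sub_div hkR hΓR hparity
  have hfirst : (2 * k : ℝ) / (2 * k - Γ) - 1 / (2 * k) ≤ (2 * k : ℝ) / (2 * k - Γ) :=
    sub_le_self _ (by positivity)
  calc (3 / 4 + Real.sqrt 33 / 12) - 1 / (2 * (k : ℝ))
      ≤ max ((2 * k : ℝ) / (2 * k - Γ)) ((3 * k + Γ) / (2 * k + 2 * Γ)) - 1 / (2 * k) :=
        sub_le_sub_right hmax _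
    _ = max ((2 * k : ℝ) / (2 * k - Γ) - 1 / (2 * k))
          ((3 * k + Γ) / (2 * k + 2 * Γ) - 1 / (2 * k)) := max_sub_sub_right _ _ _ |>.symm
    _ ≤ _ := max_le_max hfirst hcorr
end
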